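/- Rate matrix theorem (explicit successive-lumping rate matrices): the matrices R_m = −U^{m−1}(B^m)^{−1} form a rate matrix set for Q, i.e. π^m = π^{m−1} R_m for every m with 1 ≤ m ≤ M. -/
import Mathlib

open Matrix

set_option maxHeartbeats 1000000 in
theorem stmt_3
    (M l : ℕ) (hM : 1 ≤ M)
    (Q : Matrix (Fin (M+1) × Fin (l+1)) (Fin (M+1) × Fin (l+1)) ℝ)
    (htri : ∀ (m n : Fin (M+1)) (i j : Fin (l+1)),
      1 < |(m.val : ℤ) - (n.val : ℤ)| → Q (m, i) (n, j) = 0)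
    (hrow : ∀ s, ∑ t, Q s t = 0)
    (W U D : ℕ → Matrix (Fin (l+1)) (Fin (l+1)) ℝ)
    (hW : ∀ (m : ℕ) (hm : m ≤ M) (i j : Fin (l+1)),
      W m i j = Q (⟨m, by omega⟩, i) (⟨m, by omega⟩, j))
    (hU : ∀ (m : ℕ) (hm : m < M) (i j : Fin (l+1)),
      U m i j = Q (⟨m, by omega⟩, i) (⟨m+1, by omega⟩, j))
    (hD : ∀ (m : ℕ) (hm1 : 1 ≤ m) (hm2 : m ≤ M) (i j : Fin (l+1)),
      D m i j = Q (⟨m, by omega⟩, i) (⟨m-1, by omega⟩, j))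
    (hDES : ∀ (m : ℕ), 1 ≤ m → m ≤ M → ∀ (i j : Fin (l+1)), j ≠ 0 → D m i j = 0)
    (Ut : ℕ → Matrix (Fin (l+1)) (Fin (l+1)) ℝ)
    (hUt : ∀ (m : ℕ), m < M → ∀ (i j : Fin (l+1)),
      Ut m i j = if j = 0 then ∑ k, U m i k else 0)
    (hUtM : Ut M = 0)
    (B : ℕ → Matrix (Fin (l+1)) (Fin (l+1)) ℝ)
    (hB : ∀ (m : ℕ), m ≤ M → B m = W m + Ut m)
    (π : Fin (M+1) × Fin (l+1) → ℝ)
    (hπ : Matrix.vecMul π Q = 0)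
    (hBinv : ∀ (m : ℕ), 1 ≤ m → m ≤ M → IsUnit (B m))
    (R : ℕ → Matrix (Fin (l+1)) (Fin (l+1)) ℝ)
    (hR : ∀ (m : ℕ), 1 ≤ m → m ≤ M → R m = -(U (m-1) * (B m)⁻¹)) :
    ∀ (m : ℕ) (hm1 : 1 ≤ m) (hm2 : m ≤ M),
      (fun i => π (⟨m, by omega⟩, i))
        = Matrix.vecMul (fun i => π (⟨m-1, by omega⟩, i)) (R m) := by
  -- the padded level-vector of π
  set pv : ℕ → Fin (l+1) → ℝ :=
    fun n i => if h : n < M + 1 then π (⟨n, h⟩, i) else 0 with hpvdef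
  have hpv : ∀ (n : ℕ) (h : n < M+1) (i : Fin (l+1)), pv n i = π (⟨n, h⟩, i) :=
    fun n h i => dif_pos h
  -- scalar balance equations
  have hbal : ∀ t : Fin (M+1) × Fin (l+1), ∑ s, π s * Q s t = 0 := by
    intro t
    have h := congrFun hπ t
    simpa [Matrix.vecMul, dotProduct] using h
  -- three-term splitting of a sum over levels
  have sum3 : ∀ (m : ℕ) (_h1 : 1 ≤ m) (_h2 : m < M) (g : Fin (M+1) → ℝ)
      (_ : ∀ n : Fin (M+1), 1 < |(n.val : ℤ) - (m : ℤ)| → g n = 0),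
      ∑ n, g n = g ⟨m-1, by omega⟩ + g ⟨m, by omega⟩ + g ⟨m+1, by omega⟩ := by
    intro m h1 h2 g hg
    have hsub : ∑ n, g n =
        ∑ n ∈ ({⟨m-1, by omega⟩, ⟨m, by omega⟩, ⟨m+1, by omega⟩} : Finset (Fin (M+1))), g n := by
      refine (Finset.sum_subset (Finset.subset_univ _) ?_).symm
      intro x _ hx
      apply hg
      simp only [Finset.mem_insert, Finset.mem_singleton, Fin.ext_iff] at hx
      push_neg at hx
      rw [lt_abs]
      omega
    rw [hsub, Finset.sum_insert (by simp only [Finset.mem_insert, Finset.mem_singleton, Fin.ext_iff]; omega),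
      Finset.sum_insert (by simp only [Finset.mem_singleton, Fin.ext_iff]; omega), Finset.sum_singleton]
    ring
  -- two-term splitting at the top level
  have sum2 : ∀ (g : Fin (M+1) → ℝ)
      (_ : ∀ n : Fin (M+1), 1 < |(n.val : ℤ) - (M : ℤ)| → g n = 0),
      ∑ n, g n = g ⟨M-1, by omega⟩ + g ⟨M, by omega⟩ := by
    intro g hg
    have hsub : ∑ n, g n =
        ∑ n ∈ ({⟨M-1, by omega⟩, ⟨M, by omega⟩} : Finset (Fin (M+1))), g n := by
      refine (Finset.sum_subset (Finset.subset_univ _) ?_).symm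
      intro x _ hx
      apply hg
      simp only [Finset.mem_insert, Finset.mem_singleton, Fin.ext_iff] at hx
      push_neg at hx
      rw [lt_abs]
      omega
    rw [hsub, Finset.sum_insert (by simp only [Finset.mem_singleton, Fin.ext_iff]; omega),
      Finset.sum_singleton]
  -- balance equation at an interior level 1 ≤ m < M
  have hbalL : ∀ (m : ℕ), 1 ≤ m → m < M → ∀ j : Fin (l+1),
      (∑ i, pv (m-1) i * U (m-1) i j) + (∑ i, pv m i * W m i j)
      + (∑ i, pv (m+1) i * D (m+1) i j) = 0 := by
    intro m h1 h2 j
    have h := hbal (⟨m, by omega⟩, j)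
    rw [Fintype.sum_prod_type] at h
    rw [sum3 m h1 h2 (fun n => ∑ i, π (n, i) * Q (n, i) (⟨m, by omega⟩, j))
      (fun n hn => Finset.sum_eq_zero (fun i _ => by rw [htri n _ i j hn, mul_zero]))] at h
    have e1 : (∑ i, pv (m-1) i * U (m-1) i j)
        = ∑ i, π ((⟨m-1, by omega⟩ : Fin (M+1)), i) * Q (⟨m-1, by omega⟩, i) (⟨m, by omega⟩, j) := by
      refine Finset.sum_congr rfl fun i _ => ?_
      rw [hpv (m-1) (by omega) i, hU (m-1) (by omega) i j,
        show (⟨m-1+1, by omega⟩ : Fin (M+1)) = ⟨m, by omega⟩ from Fin.mk_eq_mk.mpr (by omega)]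
    have e2 : (∑ i, pv m i * W m i j)
        = ∑ i, π ((⟨m, by omega⟩ : Fin (M+1)), i) * Q (⟨m, by omega⟩, i) (⟨m, by omega⟩, j) := by
      refine Finset.sum_congr rfl fun i _ => ?_
      rw [hpv m (by omega) i, hW m (by omega) i j]
    have e3 : (∑ i, pv (m+1) i * D (m+1) i j)
        = ∑ i, π ((⟨m+1, by omega⟩ : Fin (M+1)), i) * Q (⟨m+1, by omega⟩, i) (⟨m, by omega⟩, j) := by
      refine Finset.sum_congr rfl fun i _ => ?_
      rw [hpv (m+1) (by omega) i, hD (m+1) (by omega) (by omega) i j,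
        show (⟨m+1-1, by omega⟩ : Fin (M+1)) = ⟨m, by omega⟩ from Fin.mk_eq_mk.mpr (by omega)]
    rw [e1, e2, e3]
    exact h
  -- balance equation at the top level
  have hbalM : ∀ j : Fin (l+1),
      (∑ i, pv (M-1) i * U (M-1) i j) + (∑ i, pv M i * W M i j) = 0 := by
    intro j
    have h := hbal (⟨M, by omega⟩, j)
    rw [Fintype.sum_prod_type] at h
    rw [sum2 (fun n => ∑ i, π (n, i) * Q (n, i) (⟨M, by omega⟩, j))
      (fun n hn => Finset.sum_eq_zero (fun i _ => by rw [htri n _ i j hn, mul_zero]))] at h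
    have e1 : (∑ i, pv (M-1) i * U (M-1) i j)
        = ∑ i, π ((⟨M-1, by omega⟩ : Fin (M+1)), i) * Q (⟨M-1, by omega⟩, i) (⟨M, by omega⟩, j) := by
      refine Finset.sum_congr rfl fun i _ => ?_
      rw [hpv (M-1) (by omega) i, hU (M-1) (by omega) i j,
        show (⟨M-1+1, by omega⟩ : Fin (M+1)) = ⟨M, by omega⟩ from Fin.mk_eq_mk.mpr (by omega)]
    have e2 : (∑ i, pv M i * W M i j)
        = ∑ i, π ((⟨M, by omega⟩ : Fin (M+1)), i) * Q (⟨M, by omega⟩, i) (⟨M, by omega⟩, j) := by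
      refine Finset.sum_congr rfl fun i _ => ?_
      rw [hpv M (by omega) i, hW M (by omega) i j]
    rw [e1, e2]
    exact h
  -- row sums:  ∑_k D^n(i,k) + ∑_k B^n(i,k) = 0  for 1 ≤ n ≤ M
  have hrowB : ∀ (n : ℕ), 1 ≤ n → n ≤ M → ∀ i : Fin (l+1),
      (∑ k, D n i k) + (∑ k, B n i k) = 0 := by
    intro n h1 h2 i
    have h := hrow ((⟨n, by omega⟩ : Fin (M+1)), i)
    rw [Fintype.sum_prod_type] at h
    rcases eq_or_lt_of_le h2 with hnM | hnM
    · -- n = M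
      rw [sum2 (fun n' => ∑ k, Q ((⟨n, by omega⟩ : Fin (M+1)), i) (n', k))
        (fun n' hn' => Finset.sum_eq_zero (fun k _ => by
          refine htri _ n' i k ?_
          rw [abs_sub_comm]
          simp only [show ((⟨n, by omega⟩ : Fin (M+1)) : ℕ) = n from rfl]
          rw [lt_abs] at hn' ⊢
          omega))] at h
      have e1 : (∑ k, D n i k)
          = ∑ k, Q ((⟨n, by omega⟩ : Fin (M+1)), i) (⟨M-1, by omega⟩, k) := by
        refine Finset.sum_congr rfl fun k _ => ?_
        rw [hD n h1 h2 i k,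
          show (⟨n-1, by omega⟩ : Fin (M+1)) = ⟨M-1, by omega⟩ from Fin.mk_eq_mk.mpr (by omega)]
      have e2 : (∑ k, B n i k)
          = ∑ k, Q ((⟨n, by omega⟩ : Fin (M+1)), i) (⟨M, by omega⟩, k) := by
        refine Finset.sum_congr rfl fun k _ => ?_
        rw [hB n h2, Matrix.add_apply, show Ut n = 0 from hnM ▸ hUtM, Matrix.zero_apply, add_zero,
          hW n h2 i k,
          show (⟨n, by omega⟩ : Fin (M+1)) = ⟨M, by omega⟩ from Fin.mk_eq_mk.mpr (by omega)]
      rw [e1, e2]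
      exact h
    · -- n < M
      rw [sum3 n h1 hnM (fun n' => ∑ k, Q ((⟨n, by omega⟩ : Fin (M+1)), i) (n', k))
        (fun n' hn' => Finset.sum_eq_zero (fun k _ => by
          refine htri _ n' i k ?_
          rw [abs_sub_comm]
          exact hn'))] at h
      have e1 : (∑ k, D n i k)
          = ∑ k, Q ((⟨n, by omega⟩ : Fin (M+1)), i) (⟨n-1, by omega⟩, k) := by
        refine Finset.sum_congr rfl fun k _ => ?_
        rw [hD n h1 h2 i k]
      have e2 : (∑ k, W n i k)
          = ∑ k, Q ((⟨n, by omega⟩ : Fin (M+1)), i) (⟨n, by omega⟩, k) := by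
        refine Finset.sum_congr rfl fun k _ => ?_
        rw [hW n h2 i k]
      have e3 : (∑ k, U n i k)
          = ∑ k, Q ((⟨n, by omega⟩ : Fin (M+1)), i) (⟨n+1, by omega⟩, k) := by
        refine Finset.sum_congr rfl fun k _ => ?_
        rw [hU n hnM i k]
      have e4 : (∑ k, B n i k) = (∑ k, W n i k) + (∑ k, U n i k) := by
        simp only [hB n h2, Matrix.add_apply, Finset.sum_add_distrib, hUt n hnM]
        simp
      rw [e4, e1, e2, e3]
      linarith [h]
  -- the key identity: π^{m-1} U^{m-1} + π^m B^m = 0, by downward induction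
  have key : ∀ (d m : ℕ), 1 ≤ m → m + d = M → ∀ j : Fin (l+1),
      (∑ i, pv (m-1) i * U (m-1) i j) + (∑ i, pv m i * B m i j) = 0 := by
    intro d
    induction d with
    | zero =>
      intro m h1 h2 j
      have hmM : m = M := by omega
      subst hmM
      have : ∀ i, B m i j = W m i j := fun i => by
        rw [hB m le_rfl, Matrix.add_apply, hUtM, Matrix.zero_apply, add_zero]
      simp only [this]
      exact hbalM j
    | succ d ih =>
      intro m h1 h2 j
      have hmM : m < M := by omega
      have ih' := ih (m+1) (by omega) (by omega)
      simp only [Nat.add_sub_cancel] at ih'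
      -- total down-flow from level m+1 equals total up-flow from level m
      have hS : (∑ i, pv (m+1) i * ∑ k, D (m+1) i k) = ∑ i, pv m i * ∑ k, U m i k := by
        have hr : ∀ i, (∑ k, D (m+1) i k) = -∑ k, B (m+1) i k := fun i => by
          have := hrowB (m+1) (by omega) (by omega) i; linarith
        have hcol : ∀ k, (∑ i, pv (m+1) i * B (m+1) i k) = -(∑ i, pv m i * U m i k) :=
          fun k => by have := ih' k; linarith
        calc (∑ i, pv (m+1) i * ∑ k, D (m+1) i k)
            = ∑ i, pv (m+1) i * (-∑ k, B (m+1) i k) :=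
              Finset.sum_congr rfl (fun i _ => by rw [hr i])
          _ = -∑ i, ∑ k, pv (m+1) i * B (m+1) i k := by
              simp [Finset.mul_sum, mul_neg]
          _ = -∑ k, ∑ i, pv (m+1) i * B (m+1) i k := by rw [Finset.sum_comm]
          _ = -∑ k, -(∑ i, pv m i * U m i k) := by
              congr 1; exact Finset.sum_congr rfl fun k _ => hcol k
          _ = ∑ k, ∑ i, pv m i * U m i k := by simp
          _ = ∑ i, ∑ k, pv m i * U m i k := by rw [Finset.sum_comm]
          _ = ∑ i, pv m i * ∑ k, U m i k := by simp [Finset.mul_sum]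
      have hbal' := hbalL m h1 hmM j
      by_cases hj : j = 0
      · subst hj
        have e4 : ∀ i, B m i 0 = W m i 0 + ∑ k, U m i k := fun i => by
          rw [hB m (by omega), Matrix.add_apply, hUt m hmM]; simp
        have e5 : (∑ i, pv m i * B m i 0)
            = (∑ i, pv m i * W m i 0) + ∑ i, pv m i * ∑ k, U m i k := by
          simp only [e4, mul_add, Finset.sum_add_distrib]
        have hD0 : ∀ i, (∑ k, D (m+1) i k) = D (m+1) i 0 :=
          fun i => Finset.sum_eq_single_of_mem 0 (Finset.mem_univ 0)
            (fun k _ hk => hDES (m+1) (by omega) (by omega) i k hk)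
        have e6 : (∑ i, pv (m+1) i * D (m+1) i 0) = ∑ i, pv m i * ∑ k, U m i k := by
          rw [← hS]
          exact Finset.sum_congr rfl fun i _ => by rw [hD0 i]
        rw [e5]
        linarith [hbal', e6]
      · have e5 : ∀ i, B m i j = W m i j := fun i => by
          rw [hB m (by omega), Matrix.add_apply, hUt m hmM, if_neg hj, add_zero]
        have e6 : (∑ i, pv (m+1) i * D (m+1) i j) = 0 :=
          Finset.sum_eq_zero fun i _ => by
            rw [hDES (m+1) (by omega) (by omega) i j hj, mul_zero]
        simp only [e5]
        linarith [hbal', e6]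
  -- conclude
  intro m hm1 hm2
  have hpm : (fun i => π ((⟨m, by omega⟩ : Fin (M+1)), i)) = pv m := by
    funext i; rw [hpv m (by omega) i]
  have hpm' : (fun i => π ((⟨m-1, by omega⟩ : Fin (M+1)), i)) = pv (m-1) := by
    funext i; rw [hpv (m-1) (by omega) i]
  rw [hpm, hpm']
  have hveq : Matrix.vecMul (pv (m-1)) (U (m-1)) + Matrix.vecMul (pv m) (B m) = 0 := by
    funext j
    simpa [Matrix.vecMul, dotProduct] using key (M - m) m hm1 (by omega) j
  have hBdet : IsUnit (B m).det := (Matrix.isUnit_iff_isUnit_det _).mp (hBinv m hm1 hm2)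
  have hBI : B m * (B m)⁻¹ = 1 := Matrix.mul_nonsing_inv _ hBdet
  have hneg : Matrix.vecMul (pv m) (B m) = -(Matrix.vecMul (pv (m-1)) (U (m-1))) :=
    eq_neg_of_add_eq_zero_right hveq
  calc pv m = Matrix.vecMul (pv m) 1 := (Matrix.vecMul_one _).symm
    _ = Matrix.vecMul (pv m) (B m * (B m)⁻¹) := by rw [hBI]
    _ = Matrix.vecMul (Matrix.vecMul (pv m) (B m)) (B m)⁻¹ := by rw [Matrix.vecMul_vecMul]
    _ = Matrix.vecMul (-(Matrix.vecMul (pv (m-1)) (U (m-1)))) (B m)⁻¹ := by rw [hneg]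
    _ = Matrix.vecMul (pv (m-1)) (R m) := by
        rw [hR m hm1 hm2, Matrix.vecMul_neg, ← Matrix.vecMul_vecMul, Matrix.neg_vecMul]
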